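/- arXiv:1004.5409 — 3 statements merged into one kernel-verified Lean document; each statement's English description precedes it below -/
import Mathlib

section
/- Let H_F be Hermitian on ℂ^N with ground-state energy E_F and spectral projection P_F onto the E_F-eigenspace, and suppose every other eigenvalue of H_F is at distance at least g_F > 0 from E_F. Let ψ_I be a unit vector and δ₂ = ‖P_F ψ_I‖. Then for p > 0, |e^{−p} Σ_{k=1}^{∞} (p^k/k!) ⟨ψ_I, e^{ik(H_F − E_F)} ψ_I⟩ − δ₂² | ≤ e^{−p(1−cos g_F)} + e^{−p}, provided all eigenvalue gaps λ − E_F of H_F satisfy 1 − cos(λ − E_F) ≥ 1 − cos g_F for λ ≠ E_F. -/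
set_option autoImplicit false

open scoped InnerProductSpace
open Complex

/-!
In the eigenbasis of `H_F` with weights `w_j = |⟨v_j, ψ_I⟩|²` (a probability vector) and phases
`θ_j = λ_j − E_F`, the `k`-th overlap is `Σ_j w_j e^{ikθ_j}`, so the Poisson-weighted series equals
`Σ_j w_j e^{−p}(e^{p e^{iθ_j}} − 1)`, while `δ₂² = Σ_{θ_j = 0} w_j`. A ground-state term contributes
`−e^{−p} w_j`; any other term has modulus at most `w_j (e^{−p(1 − cos θ_j)} + e^{−p})`, and the gap
condition bounds this by `w_j (e^{−p(1 − cos g_F)} + e^{−p})`. Summing the weights gives the claim.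
-/

section Eigenbasis

variable {𝕜 E ι : Type*} [RCLike 𝕜] [NormedAddCommGroup E]

theorem ContinuousLinearMap.pow_apply_of_apply_eq_smul [NormedSpace 𝕜 E] {T : E →L[𝕜] E}
    {x : E} {a : 𝕜} (h : T x = a • x) (n : ℕ) : (T ^ n) x = a ^ n • x := by
  induction n with
  | zero => simp
  | succ n ih => rw [pow_succ', mul_apply_eq_comp, ih, map_smul, h, smul_smul, pow_succ]

theorem NormedSpace.exp_apply_of_apply_eq_smul [NormedSpace 𝕜 E] [CompleteSpace E]
    {T : E →L[𝕜] E} {x : E} {a : 𝕜} (h : T x = a • x) :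
    NormedSpace.exp T x = NormedSpace.exp a • x := by
  have hT := (NormedSpace.exp_series_hasSum_exp' (𝕂 := 𝕜) T).mapL
    (ContinuousLinearMap.apply 𝕜 E x)
  have ha := (NormedSpace.exp_series_hasSum_exp' (𝕂 := 𝕜) a).smul_const x
  refine hT.unique ?_
  simpa [ContinuousLinearMap.pow_apply_of_apply_eq_smul h, smul_smul] using ha

theorem NormedSpace.exp_smul_sub_smul_one_apply_of_apply_eq_smul [NormedSpace 𝕜 E]
    [CompleteSpace E] {T : E →L[𝕜] E} {x : E} {μ : 𝕜} (h : T x = μ • x) (c a : 𝕜) :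
    NormedSpace.exp (c • (T - a • 1)) x = NormedSpace.exp (c * (μ - a)) • x := by
  refine NormedSpace.exp_apply_of_apply_eq_smul ?_
  rw [smul_apply, sub_apply, smul_apply, one_apply_eq_self, h, ← sub_smul, smul_smul]

variable [InnerProductSpace 𝕜 E] [Fintype ι] (v : OrthonormalBasis ι 𝕜 E)

theorem OrthonormalBasis.norm_sum_smul_sq (d : ι → 𝕜) :
    ‖∑ j, d j • v j‖ ^ 2 = ∑ j, ‖d j‖ ^ 2 := by
  simp [← v.sum_sq_norm_inner_right, v.orthonormal.inner_right_fintype]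

theorem OrthonormalBasis.norm_sum_ite_inner_smul_sq (q : ι → Prop) [DecidablePred q] (x : E) :
    ‖∑ j, if q j then ⟪v j, x⟫_𝕜 • v j else 0‖ ^ 2 = ∑ j, if q j then ‖⟪v j, x⟫_𝕜‖ ^ 2 else 0 := by
  simp_rw [← ite_zero_smul, v.norm_sum_smul_sq]
  simp [apply_ite]

theorem OrthonormalBasis.inner_map_eq_sum_of_apply_eq_smul {T : E →L[𝕜] E} {μ : ι → 𝕜}
    (hT : ∀ j, T (v j) = μ j • v j) (x : E) :
    ⟪x, T x⟫_𝕜 = ∑ j, μ j * (‖⟪v j, x⟫_𝕜‖ ^ 2 : ℝ) := by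
  have hTx : T x = ∑ j, (μ j * ⟪v j, x⟫_𝕜) • v j := by
    conv_lhs => rw [← v.sum_repr' x]
    simp only [map_sum, map_smul, hT, smul_smul, mul_comm]
  rw [hTx, inner_sum]
  refine Finset.sum_congr rfl fun j _ => ?_
  rw [inner_smul_right, ← inner_conj_symm x (v j), mul_assoc, RCLike.mul_conj, RCLike.ofReal_pow]

end Eigenbasis

theorem Complex.tsum_pow_succ_div_factorial (x : ℂ) :
    ∑' k : ℕ, x ^ (k + 1) / (k + 1).factorial = exp x - 1 := by
  have hexp : exp x = ∑' n : ℕ, x ^ n / n.factorial := by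
    rw [exp_eq_exp_ℂ, NormedSpace.exp_eq_tsum_div]
  rw [hexp, (NormedSpace.expSeries_div_summable x).tsum_eq_zero_add]
  simp

theorem Complex.tsum_mul_sum_pow_succ_div_factorial {ι : Type*} [Fintype ι] (p : ℂ)
    (w z : ι → ℂ) :
    ∑' k : ℕ, p ^ (k + 1) / (k + 1).factorial * ∑ j, w j * z j ^ (k + 1)
      = ∑ j, w j * (exp (p * z j) - 1) := by
  have hsummable : ∀ j, Summable fun k : ℕ => w j * ((p * z j) ^ (k + 1) / (k + 1).factorial) :=
    fun j => ((summable_nat_add_iff 1).mpr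
      (NormedSpace.expSeries_div_summable (p * z j))).mul_left (w j)
  calc ∑' k : ℕ, p ^ (k + 1) / (k + 1).factorial * ∑ j, w j * z j ^ (k + 1)
      = ∑' k : ℕ, ∑ j, w j * ((p * z j) ^ (k + 1) / (k + 1).factorial) := by
        refine tsum_congr fun k => ?_
        rw [Finset.mul_sum]
        exact Finset.sum_congr rfl fun j _ => by ring
    _ = ∑ j, w j * (exp (p * z j) - 1) := by
        rw [Summable.tsum_finsetSum fun j _ => hsummable j]
        simp_rw [tsum_mul_left, tsum_pow_succ_div_factorial]

theorem Complex.norm_exp_neg_mul_exp_mul_exp_mul_I (p θ : ℝ) :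
    ‖(Real.exp (-p) : ℂ) * exp (p * exp (θ * I))‖ = Real.exp (-p * (1 - Real.cos θ)) := by
  rw [norm_mul, norm_real, Real.norm_of_nonneg (Real.exp_pos _).le, norm_exp, re_ofReal_mul,
    exp_ofReal_mul_I_re, ← Real.exp_add]
  ring_nf

theorem Complex.norm_exp_neg_mul_exp_sub_one_sub_ite_le {p θ g : ℝ} (hp : 0 ≤ p)
    (hgap : θ ≠ 0 → 1 - Real.cos g ≤ 1 - Real.cos θ) :
    ‖(Real.exp (-p) : ℂ) * (exp (p * exp (θ * I)) - 1) - (if θ = 0 then 1 else 0)‖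
      ≤ Real.exp (-p * (1 - Real.cos g)) + Real.exp (-p) := by
  by_cases hθ : θ = 0
  · have : (Real.exp (-p) : ℂ) * (exp p - 1) - 1 = -(Real.exp (-p) : ℂ) := by
      push_cast
      rw [mul_sub, ← Complex.exp_add]
      simp
    simp only [hθ, if_true, ofReal_zero, zero_mul, exp_zero, mul_one, this, norm_neg, norm_real,
      Real.norm_of_nonneg (Real.exp_pos _).le]
    linarith [Real.exp_pos (-p * (1 - Real.cos g))]
  · rw [if_neg hθ, sub_zero, mul_sub, mul_one]
    calc _ ≤ ‖(Real.exp (-p) : ℂ) * exp (p * exp (θ * I))‖ + ‖(Real.exp (-p) : ℂ)‖ :=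
          norm_sub_le _ _
      _ ≤ _ := by
        rw [norm_exp_neg_mul_exp_mul_exp_mul_I, norm_real, Real.norm_of_nonneg (Real.exp_pos _).le]
        gcongr ?_ + _
        exact Real.exp_le_exp.mpr (by nlinarith [hgap hθ])

theorem Complex.norm_exp_neg_mul_tsum_sub_le {ι : Type*} [Fintype ι] {w θ : ι → ℝ}
    (hw0 : ∀ j, 0 ≤ w j) (hw1 : ∑ j, w j = 1) {p g : ℝ} (hp : 0 ≤ p)
    (hgap : ∀ j, θ j ≠ 0 → 1 - Real.cos g ≤ 1 - Real.cos (θ j)) :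
    ‖Real.exp (-p) * ∑' k : ℕ, (p : ℂ) ^ (k + 1) / (k + 1).factorial *
          ∑ j, (w j : ℂ) * exp (θ j * I) ^ (k + 1)
        - ∑ j, if θ j = 0 then (w j : ℂ) else 0‖
      ≤ Real.exp (-p * (1 - Real.cos g)) + Real.exp (-p) := by
  rw [tsum_mul_sum_pow_succ_div_factorial, Finset.mul_sum, ← Finset.sum_sub_distrib,
    ← mem_closedBall_zero_iff]
  have hterm : ∀ j, (Real.exp (-p) : ℂ) * ((w j : ℂ) * (exp (p * exp (θ j * I)) - 1))
      - (if θ j = 0 then (w j : ℂ) else 0) = w j •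
        ((Real.exp (-p) : ℂ) * (exp (p * exp (θ j * I)) - 1) - (if θ j = 0 then 1 else 0)) := by
    intro j
    split_ifs <;> simp only [real_smul] <;> ring
  simp_rw [hterm]
  exact (convex_closedBall _ _).sum_mem (fun j _ => hw0 j) hw1 fun j _ =>
    mem_closedBall_zero_iff.mpr (norm_exp_neg_mul_exp_sub_one_sub_ite_le hp (hgap j))

theorem stmt7_general {N : ℕ} (HF PF : EuclideanSpace ℂ (Fin N) →L[ℂ] EuclideanSpace ℂ (Fin N))
    (v : OrthonormalBasis (Fin N) ℂ (EuclideanSpace ℂ (Fin N))) (lam : Fin N → ℝ)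
    (heig : ∀ j, HF (v j) = (lam j : ℂ) • v j)
    (EF gF : ℝ)
    (hgap : ∀ j, lam j ≠ EF → 1 - Real.cos gF ≤ 1 - Real.cos (lam j - EF))
    (hPF : ∀ x, PF x = ∑ j, if lam j = EF then ⟪v j, x⟫_ℂ • v j else 0)
    (ψI : EuclideanSpace ℂ (Fin N)) (hψI : ‖ψI‖ = 1)
    (δ₂ : ℝ) (hδ₂ : δ₂ = ‖PF ψI‖) (p : ℝ) (hp : 0 < p) :
    ‖Real.exp (-p) * ∑' k : ℕ,
        (p : ℂ) ^ (k + 1) / (Nat.factorial (k + 1)) *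
          ⟪ψI, (NormedSpace.exp
            ((Complex.I * (k + 1 : ℕ)) • (HF - (EF : ℂ) • 1))) ψI⟫_ℂ
      - (δ₂ : ℂ) ^ 2‖
    ≤ Real.exp (-p * (1 - Real.cos gF)) + Real.exp (-p) := by
  set w : Fin N → ℝ := fun j => ‖⟪v j, ψI⟫_ℂ‖ ^ 2
  have hw1 : ∑ j, w j = 1 := by simp [w, v.sum_sq_norm_inner_right, hψI]
  have hinner : ∀ k : ℕ, ⟪ψI, NormedSpace.exp ((I * (k + 1 : ℕ)) • (HF - (EF : ℂ) • 1)) ψI⟫_ℂ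
      = ∑ j, (w j : ℂ) * exp ((lam j - EF : ℝ) * I) ^ (k + 1) := by
    intro k
    have hexp : ∀ j, NormedSpace.exp ((I * (k + 1 : ℕ)) • (HF - (EF : ℂ) • 1)) (v j)
        = exp ((lam j - EF : ℝ) * I) ^ (k + 1) • v j := by
      intro j
      rw [NormedSpace.exp_smul_sub_smul_one_apply_of_apply_eq_smul (heig j), ← exp_eq_exp_ℂ,
        ← exp_nat_mul]
      congr 2
      push_cast
      ring
    rw [v.inner_map_eq_sum_of_apply_eq_smul hexp]
    simp [w, mul_comm]
  have hδ : (δ₂ : ℂ) ^ 2 = ∑ j, if lam j - EF = 0 then (w j : ℂ) else 0 := by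
    rw [hδ₂, hPF, ← ofReal_pow, v.norm_sum_ite_inner_smul_sq]
    push_cast
    simp [sub_eq_zero, w, apply_ite]
  simp only [hinner, hδ]
  exact norm_exp_neg_mul_tsum_sub_le (fun j => by positivity) hw1 hp.le
    fun j h => hgap j (sub_ne_zero.mp h)

/-- quantum counting estimate.  If `H_F` is Hermitian with orthonormal
eigenbasis `v` and eigenvalues `λ`, ground-state energy `E_F` with spectral projection
`P_F`, such that every other eigenvalue `λ j ≠ E_F` satisfies
`1 − cos(λ j − E_F) ≥ 1 − cos g_F > 0`, and `δ₂ = ‖P_F ψ_I‖` for a unit vector `ψ_I`,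
then `|e^{−p} Σ_{k≥1} (p^k/k!) ⟨ψ_I, e^{ik(H_F − E_F)} ψ_I⟩ − δ₂²|
  ≤ e^{−p(1−cos g_F)} + e^{−p}`. -/
theorem stmt7 {N : ℕ} (HF PF : EuclideanSpace ℂ (Fin N) →L[ℂ] EuclideanSpace ℂ (Fin N))
    (hHF : IsSelfAdjoint HF)
    (v : OrthonormalBasis (Fin N) ℂ (EuclideanSpace ℂ (Fin N))) (lam : Fin N → ℝ)
    (heig : ∀ j, HF (v j) = (lam j : ℂ) • v j)
    (EF gF : ℝ) (hgF : 0 < 1 - Real.cos gF)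
    (hEFeig : ∃ j, lam j = EF)
    (hground : ∀ j, EF ≤ lam j)
    (hgap : ∀ j, lam j ≠ EF → 1 - Real.cos gF ≤ 1 - Real.cos (lam j - EF))
    (hPF : ∀ x, PF x = ∑ j, if lam j = EF then ⟪v j, x⟫_ℂ • v j else 0)
    (ψI : EuclideanSpace ℂ (Fin N)) (hψI : ‖ψI‖ = 1)
    (δ₂ : ℝ) (hδ₂ : δ₂ = ‖PF ψI‖) (p : ℝ) (hp : 0 < p) :
    ‖Real.exp (-p) * ∑' k : ℕ,
        (p : ℂ) ^ (k + 1) / (Nat.factorial (k + 1)) *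
          ⟪ψI, (NormedSpace.exp
            ((Complex.I * (k + 1 : ℕ)) • (HF - (EF : ℂ) • 1))) ψI⟫_ℂ
      - (δ₂ : ℂ) ^ 2‖
    ≤ Real.exp (-p * (1 - Real.cos gF)) + Real.exp (-p) :=
  stmt7_general HF PF v lam heig EF gF hgap hPF ψI hψI δ₂ hδ₂ p hp
end

section
/- Let g : [0,1] → ℝ be differentiable with |g'(s)| ≥ κ > 0 on [0,1], and let ε > 0. Then ∫₀¹ ds / √(g(s)² + ε²) ≤ (2/κ) · ln( (√(G² + ε²) + G)/ε ), where G = max_{s} |g(s)|; in particular if |g| ≤ 1 on [0,1] and ε < 1 then ∫₀¹ ds/√(g(s)²+ε²) ≤ −(4/κ) ln(ε/2). -/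
set_option autoImplicit false

open intervalIntegral

/-! Since `g'` never vanishes, Darboux's theorem gives it a constant sign, so `g` or `-g` grows
with slope at least `κ`. Hence `|g s| ≥ κ |s - c|` for a zero `c` of `g` (or an endpoint, if `g`
has no zero). Comparing with `1 / √((κ (s - c))² + ε²)`, whose primitive is
`arsinh (κ (s - c) / ε) / κ`, bounds the integral by `(2 / κ) arsinh (G / ε)`, and
`arsinh (G / ε) = log ((√(G² + ε²) + G) / ε)`. -/

open Set Real

section

variable {g : ℝ → ℝ} {a b κ : ℝ}

theorem exists_mul_abs_sub_le_abs_of_mul_sub_le_sub (hab : a ≤ b)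
    (hcont : ContinuousOn g (Icc a b))
    (hgrow : ∀ s ∈ Icc a b, ∀ t ∈ Icc a b, s ≤ t → κ * (t - s) ≤ g t - g s) :
    ∃ c ∈ Icc a b, ∀ s ∈ Icc a b, κ * |s - c| ≤ |g s| := by
  have bound : ∀ c ∈ Icc a b, (c = a ∨ g c ≤ 0) → (c = b ∨ 0 ≤ g c) →
      ∀ s ∈ Icc a b, κ * |s - c| ≤ |g s| := by
    intro c hc hleft hright s hs
    rcases le_total s c with hsc | hcs
    · rcases hleft with rfl | hgc
      · simp [le_antisymm hsc hs.1]
      · rw [abs_of_nonpos (sub_nonpos.2 hsc)]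
        linarith [hgrow s hs c hc hsc, neg_abs_le (g s)]
    · rcases hright with rfl | hgc
      · simp [le_antisymm hs.2 hcs]
      · rw [abs_of_nonneg (sub_nonneg.2 hcs)]
        linarith [hgrow c hc s hs hcs, le_abs_self (g s)]
  by_cases ha : 0 ≤ g a
  · exact ⟨a, left_mem_Icc.2 hab, bound a (left_mem_Icc.2 hab) (.inl rfl) (.inr ha)⟩
  by_cases hb : g b ≤ 0
  · exact ⟨b, right_mem_Icc.2 hab, bound b (right_mem_Icc.2 hab) (.inr hb) (.inl rfl)⟩
  obtain ⟨c, hc, hgc⟩ : ∃ c ∈ Icc a b, g c = 0 :=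
    intermediate_value_Icc hab hcont ⟨(not_le.1 ha).le, (not_le.1 hb).le⟩
  exact ⟨c, hc, bound c hc (.inr hgc.le) (.inr hgc.ge)⟩

theorem exists_mul_abs_sub_le_abs_of_le_deriv (hab : a ≤ b) (hdiff : Differentiable ℝ g)
    (hg' : ∀ s ∈ Icc a b, κ ≤ deriv g s) :
    ∃ c ∈ Icc a b, ∀ s ∈ Icc a b, κ * |s - c| ≤ |g s| :=
  exists_mul_abs_sub_le_abs_of_mul_sub_le_sub hab hdiff.continuous.continuousOn <|
    (convex_Icc a b).mul_sub_le_image_sub_of_le_deriv hdiff.continuous.continuousOn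
      hdiff.differentiableOn fun s hs ↦ hg' s (interior_subset hs)

theorem exists_mul_abs_sub_le_abs_of_le_abs_deriv (hab : a ≤ b) (hκ : 0 < κ)
    (hdiff : Differentiable ℝ g) (hg' : ∀ s ∈ Icc a b, κ ≤ |deriv g s|) :
    ∃ c ∈ Icc a b, ∀ s ∈ Icc a b, κ * |s - c| ≤ |g s| := by
  have hne : ∀ s ∈ Icc a b, deriv g s ≠ 0 := fun s hs h0 ↦ by
    have := hg' s hs
    rw [h0, abs_zero] at this
    linarith
  rcases hasDerivWithinAt_forall_lt_or_forall_gt_of_forall_ne (convex_Icc a b)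
    (fun s _ ↦ (hdiff s).hasDerivAt.hasDerivWithinAt) hne with hneg | hpos
  · obtain ⟨c, hc, hbound⟩ := exists_mul_abs_sub_le_abs_of_le_deriv hab hdiff.neg
      fun s hs ↦ by simpa [abs_of_neg (hneg s hs)] using hg' s hs
    exact ⟨c, hc, fun s hs ↦ by simpa using hbound s hs⟩
  · exact exists_mul_abs_sub_le_abs_of_le_deriv hab hdiff
      fun s hs ↦ by simpa [abs_of_pos (hpos s hs)] using hg' s hs

end

section

variable {ε : ℝ}

theorem sqrt_one_add_div_sq (hε : 0 < ε) (x : ℝ) :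
    √(1 + (x / ε) ^ 2) = √(x ^ 2 + ε ^ 2) / ε := by
  rw [← sqrt_sq hε.le, ← sqrt_div' _ (sq_nonneg ε), sqrt_sq hε.le]
  congr 1
  field_simp
  ring

theorem arsinh_div_eq_log (hε : 0 < ε) (x : ℝ) :
    arsinh (x / ε) = log ((√(x ^ 2 + ε ^ 2) + x) / ε) := by
  rw [arsinh, sqrt_one_add_div_sq hε, add_div, add_comm]

theorem hasDerivAt_arsinh_div (hε : 0 < ε) (x : ℝ) :
    HasDerivAt (fun y ↦ arsinh (y / ε)) (1 / √(x ^ 2 + ε ^ 2)) x := by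
  convert ((hasDerivAt_id' x).div_const ε).arsinh using 1
  have : 0 < √(x ^ 2 + ε ^ 2) := by positivity
  rw [sqrt_one_add_div_sq hε, smul_eq_mul]
  field_simp

theorem intervalIntegrable_one_div_sqrt_sq_add_sq {f : ℝ → ℝ} (hf : Continuous f) (hε : 0 < ε)
    (a b : ℝ) : IntervalIntegrable (fun x ↦ 1 / √(f x ^ 2 + ε ^ 2)) MeasureTheory.volume a b :=
  (continuous_const.div (by fun_prop) fun x ↦ by positivity).intervalIntegrable a b

theorem integral_one_div_sqrt_sq_add_sq (hε : 0 < ε) (a b : ℝ) :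
    ∫ x in a..b, 1 / √(x ^ 2 + ε ^ 2) = arsinh (b / ε) - arsinh (a / ε) :=
  integral_eq_sub_of_hasDerivAt (fun x _ ↦ hasDerivAt_arsinh_div hε x)
    (intervalIntegrable_one_div_sqrt_sq_add_sq continuous_id hε a b)

theorem arsinh_le_two_mul_log_two_mul {x : ℝ} (hx : 1 ≤ x) : arsinh x ≤ 2 * log (2 * x) := by
  have hsqrt : √(1 + x ^ 2) ≤ 1 + x := by
    rw [sqrt_le_left (by linarith)]
    nlinarith
  rw [arsinh, show 2 * log (2 * x) = log ((2 * x) ^ 2) by rw [log_pow]; norm_num]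
  exact log_le_log (by positivity) (by nlinarith)

end

theorem integral_one_div_sqrt_sq_add_sq_le {g : ℝ → ℝ} {a b κ ε B : ℝ} (hab : a ≤ b)
    (hκ : 0 < κ) (hdiff : Differentiable ℝ g) (hg' : ∀ s ∈ Icc a b, κ ≤ |deriv g s|)
    (hε : 0 < ε) (hB : ∀ s ∈ Icc a b, |g s| ≤ B) :
    ∫ s in a..b, 1 / √(g s ^ 2 + ε ^ 2) ≤ 2 / κ * arsinh (B / ε) := by
  obtain ⟨c, hc, hbound⟩ := exists_mul_abs_sub_le_abs_of_le_abs_deriv hab hκ hdiff hg'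
  have hcomp : ∫ s in a..b, 1 / √(g s ^ 2 + ε ^ 2) ≤
      ∫ s in a..b, 1 / √((κ * s - κ * c) ^ 2 + ε ^ 2) := by
    refine integral_mono_on hab (intervalIntegrable_one_div_sqrt_sq_add_sq hdiff.continuous hε a b)
      (intervalIntegrable_one_div_sqrt_sq_add_sq (by fun_prop) hε a b) fun s hs ↦ ?_
    have hsq : (κ * s - κ * c) ^ 2 ≤ g s ^ 2 :=
      calc (κ * s - κ * c) ^ 2 = (κ * |s - c|) ^ 2 := by rw [mul_pow, sq_abs]; ring
        _ ≤ |g s| ^ 2 := by gcongr; exact hbound s hs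
        _ = g s ^ 2 := sq_abs _
    gcongr
  have hexplicit : ∫ s in a..b, 1 / √((κ * s - κ * c) ^ 2 + ε ^ 2) =
      κ⁻¹ * (arsinh ((κ * b - κ * c) / ε) - arsinh ((κ * a - κ * c) / ε)) := by
    rw [integral_comp_mul_sub (fun x ↦ 1 / √(x ^ 2 + ε ^ 2)) hκ.ne',
      integral_one_div_sqrt_sq_add_sq hε, smul_eq_mul]
  have hright : arsinh ((κ * b - κ * c) / ε) ≤ arsinh (B / ε) := by
    have := hbound b (right_mem_Icc.2 hab)
    rw [abs_of_nonneg (sub_nonneg.2 hc.2)] at this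
    gcongr
    linarith [hB b (right_mem_Icc.2 hab)]
  have hleft : -arsinh (B / ε) ≤ arsinh ((κ * a - κ * c) / ε) := by
    have := hbound a (left_mem_Icc.2 hab)
    rw [abs_of_nonpos (sub_nonpos.2 hc.1)] at this
    rw [← arsinh_neg, ← neg_div]
    gcongr
    linarith [hB a (left_mem_Icc.2 hab)]
  calc ∫ s in a..b, 1 / √(g s ^ 2 + ε ^ 2)
      ≤ κ⁻¹ * (arsinh ((κ * b - κ * c) / ε) - arsinh ((κ * a - κ * c) / ε)) := hexplicit ▸ hcomp
    _ ≤ κ⁻¹ * (arsinh (B / ε) + arsinh (B / ε)) := by gcongr; linarith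
    _ = 2 / κ * arsinh (B / ε) := by ring

/-- for differentiable `g` with `|g'| ≥ κ > 0` on `[0,1]`, `ε > 0`, and
`G = max |g|`, one has `∫₀¹ ds/√(g²+ε²) ≤ (2/κ) ln((√(G²+ε²)+G)/ε)`; and if moreover
`|g| ≤ 1` and `ε < 1` then `∫₀¹ ds/√(g²+ε²) ≤ −(4/κ) ln(ε/2)`. -/
theorem stmt12 (g : ℝ → ℝ) (κ : ℝ) (hκ : 0 < κ)
    (hdiff : Differentiable ℝ g)
    (hg' : ∀ s ∈ Set.Icc (0:ℝ) 1, κ ≤ |deriv g s|)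
    (ε : ℝ) (hε : 0 < ε)
    (G : ℝ) (hG : ∀ s ∈ Set.Icc (0:ℝ) 1, |g s| ≤ G) :
    (∫ s in (0:ℝ)..1, 1 / Real.sqrt (g s ^ 2 + ε ^ 2)) ≤
      (2 / κ) * Real.log ((Real.sqrt (G ^ 2 + ε ^ 2) + G) / ε) ∧
    ((∀ s ∈ Set.Icc (0:ℝ) 1, |g s| ≤ 1) → ε < 1 →
      (∫ s in (0:ℝ)..1, 1 / Real.sqrt (g s ^ 2 + ε ^ 2)) ≤
        -(4 / κ) * Real.log (ε / 2)) := by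
  refine ⟨?_, fun hg1 hε1 ↦ ?_⟩
  · rw [← arsinh_div_eq_log hε]
    exact integral_one_div_sqrt_sq_add_sq_le zero_le_one hκ hdiff hg' hε hG
  calc ∫ s in (0:ℝ)..1, 1 / √(g s ^ 2 + ε ^ 2)
      ≤ 2 / κ * arsinh (1 / ε) := integral_one_div_sqrt_sq_add_sq_le zero_le_one hκ hdiff hg' hε hg1
    _ ≤ 2 / κ * (2 * log (2 * (1 / ε))) := by
        gcongr
        exact arsinh_le_two_mul_log_two_mul (one_le_one_div hε hε1.le)
    _ = -(4 / κ) * log (ε / 2) := by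
        rw [show 2 * (1 / ε) = (ε / 2)⁻¹ by field_simp, log_inv]
        ring
end

section
/- (Farhi–Gutmann precession) Let ψ_I, ψ_F be unit vectors in ℂ^N with ⟨ψ_I, ψ_F⟩ = δ > 0 real, and let H = −|ψ_I⟩⟨ψ_I| − |ψ_F⟩⟨ψ_F|. Then for ψ(t) = e^{−itH} ψ_I, the overlap satisfies |⟨ψ_F, ψ(t)⟩|² = sin²(δ t) + δ² cos²(δ t); in particular |⟨ψ_F, ψ(π/(2δ))⟩| = 1. -/
/-!
`a + b` and `a - b` are eigenvectors of `H = -|a⟩⟨a| - |b⟩⟨b|` with eigenvalues `-(1 + δ)` and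
`-(1 - δ)`. Splitting `a` along them gives
`e^{-itH} a = ½ e^{it} (e^{iδt} (a + b) + e^{-iδt} (a - b))`, hence
`⟪b, e^{-itH} a⟫ = e^{it} (δ cos δt + i sin δt)`, whose squared modulus is `sin² δt + δ² cos² δt`.
-/

set_option autoImplicit false

open scoped InnerProductSpace
open Complex

theorem ContinuousLinearMap.exp_apply_of_apply_eq_smul {E : Type*} [NormedAddCommGroup E]
    [NormedSpace ℂ E] [CompleteSpace E] {f : E →L[ℂ] E} {c : ℂ} {v : E} (h : f v = c • v) :
    NormedSpace.exp f v = Complex.exp c • v := by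
  have hpow (n : ℕ) : (f ^ n) v = c ^ n • v := by
    induction n with
    | zero => simp
    | succ n ih => rw [pow_succ, mul_apply_eq_comp, h, map_smul, ih, smul_smul, pow_succ']
  have hf := (apply ℂ E v).hasSum (NormedSpace.exp_series_hasSum_exp' (𝕂 := ℂ) f)
  have hc := (NormedSpace.exp_series_hasSum_exp' (𝕂 := ℂ) c).smul_const v
  simp only [apply_apply, smul_apply, hpow, smul_smul] at hf
  rw [Complex.exp_eq_exp_ℂ]
  exact hf.unique hc

theorem inner_eq_ofReal_symm {𝕜 F : Type*} [RCLike 𝕜] [NormedAddCommGroup F] [InnerProductSpace 𝕜 F]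
    {x y : F} {r : ℝ} (h : ⟪x, y⟫_𝕜 = r) : ⟪y, x⟫_𝕜 = r := by
  rw [← inner_conj_symm, h, RCLike.conj_ofReal]

section FarhiGutmann

variable {E : Type*} [NormedAddCommGroup E] [InnerProductSpace ℂ E]

noncomputable def farhiGutmannHamiltonian (a b : E) : E →L[ℂ] E :=
  -(innerSL ℂ a).smulRight a - (innerSL ℂ b).smulRight b

theorem farhiGutmannHamiltonian_apply (a b x : E) :
    farhiGutmannHamiltonian a b x = -(⟪a, x⟫_ℂ • a) - ⟪b, x⟫_ℂ • b := rfl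

variable {a b : E} {δ : ℝ} (ha : ‖a‖ = 1) (hb : ‖b‖ = 1) (hab : ⟪a, b⟫_ℂ = δ)
include ha hb hab

theorem farhiGutmannHamiltonian_apply_add :
    farhiGutmannHamiltonian a b (a + b) = (-(1 + δ) : ℂ) • (a + b) := by
  have hba : ⟪b, a⟫_ℂ = δ := inner_eq_ofReal_symm hab
  simp only [farhiGutmannHamiltonian_apply, inner_add_right, inner_self_eq_norm_sq_to_K, ha, hb,
    hab, hba]
  module

theorem farhiGutmannHamiltonian_apply_sub :
    farhiGutmannHamiltonian a b (a - b) = (-(1 - δ) : ℂ) • (a - b) := by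
  have hba : ⟪b, a⟫_ℂ = δ := inner_eq_ofReal_symm hab
  simp only [farhiGutmannHamiltonian_apply, inner_sub_right, inner_self_eq_norm_sq_to_K, ha, hb,
    hab, hba]
  module

variable [CompleteSpace E]

theorem exp_farhiGutmannHamiltonian_apply (t : ℝ) :
    NormedSpace.exp ((-I * t) • farhiGutmannHamiltonian a b) a =
      (2⁻¹ * exp (I * t * (1 + δ))) • (a + b) + (2⁻¹ * exp (I * t * (1 - δ))) • (a - b) := by
  have hplus : ((-I * t) • farhiGutmannHamiltonian a b) (a + b) = (I * t * (1 + δ)) • (a + b) := by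
    rw [smul_apply, farhiGutmannHamiltonian_apply_add ha hb hab, smul_smul]; ring_nf
  have hminus : ((-I * t) • farhiGutmannHamiltonian a b) (a - b) = (I * t * (1 - δ)) • (a - b) := by
    rw [smul_apply, farhiGutmannHamiltonian_apply_sub ha hb hab, smul_smul]; ring_nf
  calc _ = NormedSpace.exp ((-I * t) • farhiGutmannHamiltonian a b)
        ((2⁻¹ : ℂ) • (a + b) + (2⁻¹ : ℂ) • (a - b)) := by congr 1; module
    _ = _ := by
      rw [map_add, map_smul, map_smul, ContinuousLinearMap.exp_apply_of_apply_eq_smul hplus,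
        ContinuousLinearMap.exp_apply_of_apply_eq_smul hminus, smul_smul, smul_smul]

theorem inner_exp_farhiGutmannHamiltonian_apply (t : ℝ) :
    ⟪b, NormedSpace.exp ((-I * t) • farhiGutmannHamiltonian a b) a⟫_ℂ =
      exp (t * I) * (δ * Real.cos (δ * t) + Real.sin (δ * t) * I) := by
  have hba : ⟪b, a⟫_ℂ = δ := inner_eq_ofReal_symm hab
  rw [exp_farhiGutmannHamiltonian_apply ha hb hab, inner_add_right, inner_smul_right,
    inner_smul_right, inner_add_right, inner_sub_right, hba, inner_self_eq_norm_sq_to_K, hb]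
  have hplus : exp (I * t * (1 + δ)) = exp (t * I) * exp ((δ * t : ℝ) * I) := by
    rw [← exp_add]; push_cast; ring_nf
  have hminus : exp (I * t * (1 - δ)) = exp (t * I) * exp ((-(δ * t) : ℝ) * I) := by
    rw [← exp_add]; push_cast; ring_nf
  simp only [hplus, hminus, exp_mul_I, ← ofReal_cos, ← ofReal_sin, Real.cos_neg, Real.sin_neg]
  push_cast
  ring

theorem norm_inner_exp_farhiGutmannHamiltonian_apply_sq (t : ℝ) :
    ‖⟪b, NormedSpace.exp ((-I * t) • farhiGutmannHamiltonian a b) a⟫_ℂ‖ ^ 2 =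
      Real.sin (δ * t) ^ 2 + δ ^ 2 * Real.cos (δ * t) ^ 2 := by
  rw [inner_exp_farhiGutmannHamiltonian_apply ha hb hab, norm_mul, norm_exp_ofReal_mul_I, one_mul,
    ← ofReal_mul, Complex.sq_norm, normSq_add_mul_I]
  ring

end FarhiGutmann

theorem stmt17_general {N : ℕ} (ψI ψF : EuclideanSpace ℂ (Fin N))
    (hψI : ‖ψI‖ = 1) (hψF : ‖ψF‖ = 1)
    (δ : ℝ) (hδ0 : 0 < δ) (hinner : ⟪ψI, ψF⟫_ℂ = (δ : ℂ))
    (H : EuclideanSpace ℂ (Fin N) →L[ℂ] EuclideanSpace ℂ (Fin N))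
    (hH : H = -(innerSL ℂ ψI).smulRight ψI - (innerSL ℂ ψF).smulRight ψF)
    (ψ : ℝ → EuclideanSpace ℂ (Fin N))
    (hψ : ∀ t, ψ t = (NormedSpace.exp ((-Complex.I * (t : ℂ)) • H)) ψI) :
    (∀ t : ℝ, ‖⟪ψF, ψ t⟫_ℂ‖ ^ 2 =
      Real.sin (δ * t) ^ 2 + δ ^ 2 * Real.cos (δ * t) ^ 2) ∧
    ‖⟪ψF, ψ (Real.pi / (2 * δ))⟫_ℂ‖ = 1 := by
  have hprob (t : ℝ) : ‖⟪ψF, ψ t⟫_ℂ‖ ^ 2 = Real.sin (δ * t) ^ 2 + δ ^ 2 * Real.cos (δ * t) ^ 2 := by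
    rw [hψ, hH]
    exact norm_inner_exp_farhiGutmannHamiltonian_apply_sq hψI hψF hinner t
  refine ⟨hprob, ?_⟩
  have hquarter : δ * (Real.pi / (2 * δ)) = Real.pi / 2 := by field_simp
  have h := hprob (Real.pi / (2 * δ))
  rw [hquarter, Real.sin_pi_div_two, Real.cos_pi_div_two] at h
  exact (pow_eq_one_iff_of_nonneg (norm_nonneg _) two_ne_zero).mp (h.trans (by ring))

/-- Farhi–Gutmann precession: for unit vectors `ψ_I, ψ_F` with
`⟨ψ_I, ψ_F⟩ = δ ∈ (0,1)` real, `H = −|ψ_I⟩⟨ψ_I| − |ψ_F⟩⟨ψ_F|`, and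
`ψ t = e^{−itH} ψ_I`, one has `|⟨ψ_F, ψ t⟩|² = sin²(δt) + δ² cos²(δt)`; in particular
`|⟨ψ_F, ψ(π/(2δ))⟩| = 1`. -/
theorem stmt17 {N : ℕ} (ψI ψF : EuclideanSpace ℂ (Fin N))
    (hψI : ‖ψI‖ = 1) (hψF : ‖ψF‖ = 1)
    (δ : ℝ) (hδ0 : 0 < δ) (hδ1 : δ < 1) (hinner : ⟪ψI, ψF⟫_ℂ = (δ : ℂ))
    (H : EuclideanSpace ℂ (Fin N) →L[ℂ] EuclideanSpace ℂ (Fin N))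
    (hH : H = -(innerSL ℂ ψI).smulRight ψI - (innerSL ℂ ψF).smulRight ψF)
    (ψ : ℝ → EuclideanSpace ℂ (Fin N))
    (hψ : ∀ t, ψ t = (NormedSpace.exp ((-Complex.I * (t : ℂ)) • H)) ψI) :
    (∀ t : ℝ, ‖⟪ψF, ψ t⟫_ℂ‖ ^ 2 =
      Real.sin (δ * t) ^ 2 + δ ^ 2 * Real.cos (δ * t) ^ 2) ∧
    ‖⟪ψF, ψ (Real.pi / (2 * δ))⟫_ℂ‖ = 1 :=
  stmt17_general ψI ψF hψI hψF δ hδ0 hinner H hH ψ hψ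
end
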